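/- For any separable state ρ = Σ_k p_k σ_k^A ⊗ σ_k^B (with p_k ≥ 0, Σ p_k = 1, σ_k^A, σ_k^B density matrices), the sum of the canonical Schmidt coefficients of ρ is at most 1 (cross-norm separability criterion, necessity direction). -/

import Mathlib

open Matrix Kronecker ComplexOrder

namespace Stmt10Aux

variable {m n : ℕ}

/-- flatten a matrix into a Euclidean space vector -/
def T (A : Matrix (Fin m) (Fin m) ℂ) : EuclideanSpace ℂ (Fin m × Fin m) :=
  WithLp.toLp 2 (fun q : Fin m × Fin m => A q.1 q.2)

lemma inner_T (A B : Matrix (Fin m) (Fin m) ℂ) :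
    (inner ℂ (T A) (T B) : ℂ) = (Aᴴ * B).trace := by
  simp only [T, PiLp.inner_apply, RCLike.inner_apply, Matrix.trace, Matrix.diag,
    Matrix.mul_apply, Matrix.conjTranspose_apply]
  rw [Fintype.sum_prod_type]
  exact Finset.sum_comm.symm.trans (by simp [mul_comm])

lemma kron_conjTranspose (A : Matrix (Fin m) (Fin m) ℂ) (B : Matrix (Fin n) (Fin n) ℂ) :
    (A ⊗ₖ B)ᴴ = Aᴴ ⊗ₖ Bᴴ := by
  ext ⟨i, j⟩ ⟨i', j'⟩
  simp [Matrix.conjTranspose_apply, Matrix.kroneckerMap_apply]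

lemma trace_sq_le {σ : Matrix (Fin m) (Fin m) ℂ} (h : σ.PosSemidef) (ht : σ.trace = 1) :
    ((σᴴ * σ).trace).re ≤ 1 := by
  have hherm := h.1
  have hspec := hherm.spectral_theorem
  rw [Unitary.conjStarAlgAut_apply] at hspec
  set U : Matrix (Fin m) (Fin m) ℂ := (hherm.eigenvectorUnitary : Matrix (Fin m) (Fin m) ℂ) with hU
  have hUU : star U * U = 1 := (Matrix.mem_unitaryGroup_iff').mp hherm.eigenvectorUnitary.2
  set D : Matrix (Fin m) (Fin m) ℂ := Matrix.diagonal (RCLike.ofReal ∘ hherm.eigenvalues) with hD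
  have hσ2 : σᴴ * σ = U * (D * D) * star U := by
    rw [hherm.eq]
    calc σ * σ = (U * D * star U) * (U * D * star U) := by rw [← hspec]
    _ = U * (D * (star U * U) * D) * star U := by noncomm_ring
    _ = U * (D * D) * star U := by rw [hUU]; noncomm_ring
  have htr2 : (σᴴ * σ).trace = ∑ i, ((hherm.eigenvalues i : ℂ)) ^ 2 := by
    rw [hσ2, Matrix.trace_mul_cycle, ← Matrix.mul_assoc, hUU, Matrix.one_mul, hD,
      Matrix.diagonal_mul_diagonal, Matrix.trace_diagonal]
    simp [sq]
  have htr1 : (1 : ℝ) = ∑ i, hherm.eigenvalues i := by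
    have : σ.trace = ∑ i, ((hherm.eigenvalues i : ℂ)) := by
      conv_lhs => rw [hspec]
      rw [Matrix.trace_mul_cycle, hUU, Matrix.one_mul, hD, Matrix.trace_diagonal]
      simp
    rw [ht] at this
    exact_mod_cast this
  rw [htr2]
  have : (∑ i, ((hherm.eigenvalues i : ℂ)) ^ 2) = ((∑ i, (hherm.eigenvalues i) ^ 2 : ℝ) : ℂ) := by
    push_cast; ring_nf
  rw [this, Complex.ofReal_re, htr1]
  calc ∑ i, hherm.eigenvalues i ^ 2 ≤ (∑ i, hherm.eigenvalues i) ^ 2 :=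
        Finset.sum_sq_le_sq_sum_of_nonneg (fun i _ => h.eigenvalues_nonneg i)
  _ = (∑ i, hherm.eigenvalues i) * (∑ i, hherm.eigenvalues i) := sq _
  _ ≤ _ := le_of_eq (by rw [← htr1]; ring)

/-- Bessel + norm bound : for an orthonormal family and a density matrix,
the sum of squared inner products is at most 1 -/
lemma bessel_bound {r : ℕ} (E : Fin r → Matrix (Fin m) (Fin m) ℂ)
    (hE : ∀ α α', ((E α)ᴴ * E α').trace = if α = α' then 1 else 0)
    {σ : Matrix (Fin m) (Fin m) ℂ} (h : σ.PosSemidef) (ht : σ.trace = 1) :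
    ∑ α, ‖((E α)ᴴ * σ).trace‖ ^ 2 ≤ 1 := by
  have horth : Orthonormal ℂ (fun α => T (E α)) := by
    rw [orthonormal_iff_ite]
    intro α α'
    rw [inner_T, hE]
  have hb := horth.sum_inner_products_le (s := Finset.univ) (T σ)
  simp only [inner_T] at hb
  refine le_trans hb ?_
  have : ‖T σ‖ ^ 2 = ((σᴴ * σ).trace).re := by
    rw [← inner_T σ σ]
    have := @inner_self_eq_norm_sq ℂ _ _ _ _ (T σ)
    rw [← this]
    rfl
  rw [this]
  exact trace_sq_le h ht

end Stmt10Aux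

namespace Stmt10Aux

lemma cs_bound {r : ℕ} (a b : Fin r → ℂ) (ha : ∑ α, ‖a α‖ ^ 2 ≤ 1) (hb : ∑ α, ‖b α‖ ^ 2 ≤ 1) :
    ‖∑ α, a α * b α‖ ≤ 1 := by
  have h1 : ‖∑ α, a α * b α‖ ≤ ∑ α, ‖a α‖ * ‖b α‖ :=
    (norm_sum_le _ _).trans (le_of_eq (by simp [norm_mul]))
  have h2 := Finset.sum_mul_sq_le_sq_mul_sq Finset.univ (fun α => ‖a α‖) (fun α => ‖b α‖)
  have h3 : (0:ℝ) ≤ ∑ α, ‖a α‖ * ‖b α‖ :=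
    Finset.sum_nonneg fun α _ => mul_nonneg (norm_nonneg _) (norm_nonneg _)
  have h4 : (0:ℝ) ≤ ∑ α, ‖a α‖ ^ 2 := Finset.sum_nonneg fun α _ => sq_nonneg _
  have h5 : (0:ℝ) ≤ ∑ α, ‖b α‖ ^ 2 := Finset.sum_nonneg fun α _ => sq_nonneg _
  nlinarith [h1, h2, h3, h4, h5]

end Stmt10Aux

/-- For any separable state ρ = Σ_k p_k σ_k^A ⊗ σ_k^B (p_k ≥ 0, Σ p_k = 1,
σ_k^A, σ_k^B density matrices), the sum of the canonical Schmidt coefficients of ρ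
(i.e. of any operator Schmidt decomposition of ρ) is at most 1. -/
theorem stmt_10 {m n k : ℕ} (p : Fin k → ℝ)
    (σA : Fin k → Matrix (Fin m) (Fin m) ℂ) (σB : Fin k → Matrix (Fin n) (Fin n) ℂ)
    (hp : ∀ i, 0 ≤ p i) (hp1 : ∑ i, p i = 1)
    (hσA : ∀ i, (σA i).PosSemidef) (htA : ∀ i, (σA i).trace = 1)
    (hσB : ∀ i, (σB i).PosSemidef) (htB : ∀ i, (σB i).trace = 1)
    (r : ℕ) (lam : Fin r → ℝ)
    (EA : Fin r → Matrix (Fin m) (Fin m) ℂ) (EB : Fin r → Matrix (Fin n) (Fin n) ℂ)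
    (hlam : ∀ α, 0 < lam α)
    (hEA : ∀ α α', ((EA α)ᴴ * EA α').trace = if α = α' then 1 else 0)
    (hEB : ∀ α α', ((EB α)ᴴ * EB α').trace = if α = α' then 1 else 0)
    (hdec : ∑ i, (p i : ℂ) • (σA i ⊗ₖ σB i) = ∑ α, (lam α : ℂ) • (EA α ⊗ₖ EB α)) :
    ∑ α, lam α ≤ 1 := by
  classical
  set a : Fin k → Fin r → ℂ := fun i α => ((EA α)ᴴ * σA i).trace with ha
  set b : Fin k → Fin r → ℂ := fun i α => ((EB α)ᴴ * σB i).trace with hb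
  have key : ∀ β, (lam β : ℂ) = ∑ i, (p i : ℂ) * (a i β * b i β) := by
    intro β
    have h := congrArg (fun M => (((EA β ⊗ₖ EB β)ᴴ) * M).trace) hdec
    simp only [Matrix.mul_sum, Matrix.mul_smul, Matrix.trace_sum, Matrix.trace_smul,
      smul_eq_mul] at h
    have lhs : ∀ i : Fin k,
        (((EA β ⊗ₖ EB β)ᴴ) * (σA i ⊗ₖ σB i)).trace = a i β * b i β := fun i => by
      rw [Stmt10Aux.kron_conjTranspose, ← Matrix.mul_kronecker_mul, Matrix.trace_kronecker]
    have rhs : ∀ α,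
        (((EA β ⊗ₖ EB β)ᴴ) * (EA α ⊗ₖ EB α)).trace = if β = α then 1 else 0 := fun α => by
      rw [Stmt10Aux.kron_conjTranspose, ← Matrix.mul_kronecker_mul, Matrix.trace_kronecker,
        hEA, hEB]
      by_cases hc : β = α <;> simp [hc]
    simp only [lhs, rhs, mul_ite, mul_one, mul_zero, Finset.sum_ite_eq] at h
    simpa using h.symm
  -- each Bessel bound
  have hA : ∀ i, ∑ α, ‖a i α‖ ^ 2 ≤ 1 := fun i =>
    Stmt10Aux.bessel_bound EA hEA (hσA i) (htA i)
  have hB : ∀ i, ∑ α, ‖b i α‖ ^ 2 ≤ 1 := fun i =>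
    Stmt10Aux.bessel_bound EB hEB (hσB i) (htB i)
  have main : ∑ β, lam β = (∑ i, (p i : ℂ) * ∑ β, a i β * b i β).re := by
    have hswap : (∑ i, (p i : ℂ) * ∑ β, a i β * b i β)
        = ∑ β, ∑ i, (p i : ℂ) * (a i β * b i β) := by
      rw [Finset.sum_comm]
      exact Finset.sum_congr rfl fun i _ => Finset.mul_sum _ _ _
    rw [hswap, Complex.re_sum]
    exact Finset.sum_congr rfl fun β _ => by rw [← key β]; simp
  rw [main]
  calc (∑ i, (p i : ℂ) * ∑ β, a i β * b i β).re
      = ∑ i, ((p i : ℂ) * ∑ β, a i β * b i β).re := by rw [Complex.re_sum]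
    _ ≤ ∑ i, p i := by
        refine Finset.sum_le_sum fun i _ => ?_
        have : ((p i : ℂ) * ∑ β, a i β * b i β).re = p i * (∑ β, a i β * b i β).re := by
          simp [Complex.mul_re]
        rw [this]
        have h1 : (∑ β, a i β * b i β).re ≤ ‖∑ β, a i β * b i β‖ :=
          (Complex.re_le_norm _)
        have h2 := Stmt10Aux.cs_bound (a i) (b i) (hA i) (hB i)
        calc p i * (∑ β, a i β * b i β).re ≤ p i * 1 :=
              mul_le_mul_of_nonneg_left (h1.trans h2) (hp i)
          _ = p i := mul_one _
    _ = 1 := hp1
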